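/- Let μ and λ be two S-valued measures on the countable atomless Boolean algebra 𝔹, both satisfying (4EP). Then there exists a Boolean algebra automorphism Φ of 𝔹 with λ(b) = μ(Φ(b)) for all b ∈ 𝔹 if and only if Σ(λ) = Σ(μ), where Σ(ν) denotes the trinary spectrum {(ν(a),ν(b),ν(c)) : {a,b,c} is a partition of 𝔹}. -/

import Mathlib

/-!
Back and forth. Call a finite family of pairs `(x, u)` a matched partition when the `x` form a
partition of `𝔹`, the `u` form a partition of `𝔹`, and `λ x = μ u` for every pair. Such a family
can be refined so as to decide any given element `c` on the `λ`-side: a pair `(x, u)` with `x` cut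
by `c` into `y = x ⊓ c` and `z = x \ c` is replaced by `(y, v), (z, w)`. Since `Σ(λ) = Σ(μ)`, the
triple `(λ y, λ z, λ xᶜ)` is realized by a `μ`-partition, and (4EP) moves its first two pieces
inside `u` (when `x = ⊤` the spectrum alone suffices). By symmetry the same works on the `μ`-side.
Enumerating `𝔹`, a chain of refinements decides every element on both sides, and sending `c` to
the union of the `u` matched with the pieces `x ≤ c` is the required automorphism.
-/

variable {B : Type*} [BooleanAlgebra B] {S : Type*} [AddCommMonoid S]

/-- An `S`-valued finitely additive measure on the Boolean algebra `B`. -/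
def IsBAMeasure (μ : B → S) : Prop :=
  μ ⊥ = 0 ∧ ∀ a b : B, Disjoint a b → μ (a ⊔ b) = μ a + μ b

/-- An element is proper if it differs from `⊥` and `⊤`. -/
def IsProperElem (a : B) : Prop := a ≠ ⊥ ∧ a ≠ ⊤

/-- `{a, b, c}` is a partition of `B` into three nonzero pairwise disjoint pieces. -/
def IsPartition3 (a b c : B) : Prop :=
  a ≠ ⊥ ∧ b ≠ ⊥ ∧ c ≠ ⊥ ∧ Disjoint a b ∧ Disjoint a c ∧ Disjoint b c ∧ a ⊔ b ⊔ c = ⊤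

/-- A Boolean automorphism `φ` preserves the measure `μ`. -/
def PreservesMeas (μ : B → S) (φ : B ≃o B) : Prop := ∀ x : B, μ (φ x) = μ x

/-- `μ` is homogeneous: every partial `μ`-isomorphism on a 4-element subalgebra
(equivalently, determined by proper `a ↦ b` with `μ a = μ b`, `μ aᶜ = μ bᶜ`)
extends to a `μ`-automorphism. -/
def MeasHomogeneous (μ : B → S) : Prop :=
  ∀ a b : B, IsProperElem a → IsProperElem b → μ a = μ b → μ aᶜ = μ bᶜ →
    ∃ φ : B ≃o B, PreservesMeas μ φ ∧ φ a = b

/-- The 4 elements property (4EP). -/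
def MeasHas4EP (μ : B → S) : Prop :=
  ∀ a b c d : B, IsPartition3 a b c → μ a + μ b = μ d → μ c = μ dᶜ →
    ∃ p q : B, IsProperElem p ∧ IsProperElem q ∧ Disjoint p q ∧
      μ p = μ a ∧ μ q = μ b ∧ p ⊔ q = d

/-- The trinary spectrum of a measure. -/
def TrinarySpectrum (μ : B → S) : Set (S × S × S) :=
  {t | ∃ a b c : B, IsPartition3 a b c ∧ t = (μ a, μ b, μ c)}

set_option linter.unusedSectionVars false

open Finset

section Lattice

variable {α ι : Type*}

theorem Finset.mem_of_le_sup_of_pairwiseDisjoint [DistribLattice α] [OrderBot α]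
    {s t : Finset ι} {f : ι → α} {i : ι} (hs : (s : Set ι).PairwiseDisjoint f) (hts : t ⊆ s)
    (hi : i ∈ s) (hfi : f i ≠ ⊥) (h : f i ≤ t.sup f) : i ∈ t := by
  by_contra hit
  exact hfi (disjoint_self.1 <| (hs.supIndep hts hi hit).mono_right h)

theorem Finset.sup_filter_le_eq [DistribLattice α] [BoundedOrder α] {s : Finset ι} {f : ι → α}
    {c : α} [DecidablePred fun i => f i ≤ c] (htop : s.sup f = ⊤)
    (hc : ∀ i ∈ s, f i ≤ c ∨ Disjoint (f i) c) : (s.filter fun i => f i ≤ c).sup f = c := by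
  refine le_antisymm (Finset.sup_le fun i hi => (mem_filter.1 hi).2) ?_
  calc c = s.sup fun i => c ⊓ f i := by rw [← Finset.sup_inf_distrib_left, htop, inf_top_eq]
    _ ≤ (s.filter fun i => f i ≤ c).sup f := Finset.sup_le fun i hi => by
      rcases hc i hi with h | h
      · exact inf_le_right.trans (le_sup (mem_filter.2 ⟨hi, h⟩))
      · simp [h.symm.eq_bot]

theorem Finset.sup_erase_eq_compl [BooleanAlgebra α] [DecidableEq ι] {s : Finset ι}
    {f : ι → α} {i : ι} (hs : (s : Set ι).PairwiseDisjoint f) (htop : s.sup f = ⊤)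
    (hi : i ∈ s) : (s.erase i).sup f = (f i)ᶜ := by
  refine (IsCompl.compl_eq ⟨hs.supIndep (erase_subset i s) hi (notMem_erase i s), ?_⟩).symm
  rw [codisjoint_iff, ← sup_insert, insert_erase hi, htop]

variable [BooleanAlgebra α]

theorem exists_disjoint_sup_eq_of_ne_bot (hatomless : ∀ a : α, a ≠ ⊥ → ∃ b : α, b ≠ ⊥ ∧ b < a)
    {a : α} (ha : a ≠ ⊥) : ∃ y z : α, y ≠ ⊥ ∧ z ≠ ⊥ ∧ Disjoint y z ∧ y ⊔ z = a := by
  obtain ⟨y, hy, hya⟩ := hatomless a ha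
  exact ⟨y, a \ y, hy, fun h => hya.not_ge (sdiff_eq_bot_iff.1 h), disjoint_sdiff_self_right,
    sup_sdiff_cancel_right hya.le⟩

theorem exists_isPartition3 [Nontrivial α]
    (hatomless : ∀ a : α, a ≠ ⊥ → ∃ b : α, b ≠ ⊥ ∧ b < a) : ∃ a b c : α, IsPartition3 a b c := by
  obtain ⟨a, b, ha, hb, hab, habtop⟩ := exists_disjoint_sup_eq_of_ne_bot hatomless top_ne_bot
  obtain ⟨y, z, hy, hz, hyz, hyzb⟩ := exists_disjoint_sup_eq_of_ne_bot hatomless hb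
  subst hyzb
  exact ⟨a, y, z, ha, hy, hz, hab.mono_right le_sup_left, hab.mono_right le_sup_right, hyz,
    by rw [sup_assoc, habtop]⟩

theorem IsPartition3.map_orderIso {a b c : α} (h : IsPartition3 a b c) (e : α ≃o α) :
    IsPartition3 (e a) (e b) (e c) := by
  obtain ⟨ha, hb, hc, hab, hac, hbc, htop⟩ := h
  refine ⟨?_, ?_, ?_, hab.map_orderIso e, hac.map_orderIso e, hbc.map_orderIso e, ?_⟩
  · simpa using ha
  · simpa using hb
  · simpa using hc
  · rw [← map_sup, ← map_sup, htop, map_top]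

end Lattice

theorem trinarySpectrum_subset_of_forall_eq_comp {T : Type*} {μ lam : B → T} (e : B ≃o B)
    (h : ∀ b, lam b = μ (e b)) : TrinarySpectrum lam ⊆ TrinarySpectrum μ := by
  rintro t ⟨a, b, c, habc, rfl⟩
  exact ⟨e a, e b, e c, habc.map_orderIso e, by rw [h a, h b, h c]⟩

variable {ν μ lam : B → S}

theorem IsBAMeasure.map_finset_sup (hν : IsBAMeasure ν) {ι : Type*} {s : Finset ι} {f : ι → B}
    (hs : (s : Set ι).PairwiseDisjoint f) : ν (s.sup f) = ∑ i ∈ s, ν (f i) := by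
  classical
  induction s using Finset.induction_on with
  | empty => simpa using hν.1
  | insert i s hi ih =>
    rw [coe_insert, Set.pairwiseDisjoint_insert] at hs
    have hdisj : Disjoint (f i) (s.sup f) :=
      Finset.disjoint_sup_right.2 fun j hj => hs.2 j hj (ne_of_mem_of_not_mem hj hi).symm
    rw [sup_insert, sum_insert hi, hν.2 _ _ hdisj, ih hs.1]

theorem IsBAMeasure.map_top_eq (hν : IsBAMeasure ν) {a b c : B} (h : IsPartition3 a b c) :
    ν ⊤ = ν a + ν b + ν c := by
  obtain ⟨-, -, -, hab, hac, hbc, htop⟩ := h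
  rw [← htop, hν.2 _ _ (hac.sup_left hbc), hν.2 _ _ hab]

theorem map_top_eq_of_trinarySpectrum_subset [Nontrivial B]
    (hatomless : ∀ a : B, a ≠ ⊥ → ∃ b : B, b ≠ ⊥ ∧ b < a) (hμ : IsBAMeasure μ)
    (hlam : IsBAMeasure lam) (hsub : TrinarySpectrum lam ⊆ TrinarySpectrum μ) : μ ⊤ = lam ⊤ := by
  obtain ⟨a, b, c, habc⟩ := exists_isPartition3 hatomless
  obtain ⟨a', b', c', habc', heq⟩ := hsub ⟨a, b, c, habc, rfl⟩
  simp only [Prod.mk.injEq] at heq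
  rw [hμ.map_top_eq habc', hlam.map_top_eq habc, heq.1, heq.2.1, heq.2.2]

open scoped Classical

/-- `s` pairs the pieces `p.1` of a partition of `a.1` with the pieces `p.2` of a partition of
`a.2`, matching the `lam`-measure of each `p.1` with the `μ`-measure of `p.2`. -/
structure IsMatchedPartition (μ lam : B → S) (a : B × B) (s : Finset (B × B)) : Prop where
  fst_ne_bot : ∀ p ∈ s, p.1 ≠ ⊥
  snd_ne_bot : ∀ p ∈ s, p.2 ≠ ⊥
  measure_eq : ∀ p ∈ s, μ p.2 = lam p.1
  pairwiseDisjoint_fst : (s : Set (B × B)).PairwiseDisjoint Prod.fst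
  pairwiseDisjoint_snd : (s : Set (B × B)).PairwiseDisjoint Prod.snd
  sup_fst : s.sup Prod.fst = a.1
  sup_snd : s.sup Prod.snd = a.2

theorem isMatchedPartition_singleton {p : B × B} (h1 : p.1 ≠ ⊥) (h2 : p.2 ≠ ⊥)
    (hp : μ p.2 = lam p.1) : IsMatchedPartition μ lam p {p} where
  fst_ne_bot q hq := by rwa [mem_singleton.1 hq]
  snd_ne_bot q hq := by rwa [mem_singleton.1 hq]
  measure_eq q hq := by rwa [mem_singleton.1 hq]
  pairwiseDisjoint_fst := by simp
  pairwiseDisjoint_snd := by simp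
  sup_fst := sup_singleton
  sup_snd := sup_singleton

theorem isMatchedPartition_pair {x y u v : B} (hx : x ≠ ⊥) (hy : y ≠ ⊥) (hu : u ≠ ⊥) (hv : v ≠ ⊥)
    (hxy : Disjoint x y) (huv : Disjoint u v) (hxu : μ u = lam x) (hyv : μ v = lam y) :
    IsMatchedPartition μ lam (x ⊔ y, u ⊔ v) {(x, u), (y, v)} where
  fst_ne_bot := by simp [hx, hy]
  snd_ne_bot := by simp [hu, hv]
  measure_eq := by simp [hxu, hyv]
  pairwiseDisjoint_fst := by
    rw [coe_pair]
    exact (Set.pairwiseDisjoint_singleton _ _).insert fun _ h _ => by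
      rwa [Set.mem_singleton_iff.1 h]
  pairwiseDisjoint_snd := by
    rw [coe_pair]
    exact (Set.pairwiseDisjoint_singleton _ _).insert fun _ h _ => by
      rwa [Set.mem_singleton_iff.1 h]
  sup_fst := by simp
  sup_snd := by simp

namespace IsMatchedPartition

variable {a : B × B} {s : Finset (B × B)}

theorem le_of_mem (hs : IsMatchedPartition μ lam a s) {p : B × B} (hp : p ∈ s) : p ≤ a :=
  Prod.le_def.2 ⟨hs.sup_fst ▸ le_sup (f := Prod.fst) hp, hs.sup_snd ▸ le_sup (f := Prod.snd) hp⟩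

theorem measure_sup (hμ : IsBAMeasure μ) (hlam : IsBAMeasure lam)
    (hs : IsMatchedPartition μ lam a s) {t : Finset (B × B)} (hts : t ⊆ s) :
    μ (t.sup Prod.snd) = lam (t.sup Prod.fst) := by
  rw [hμ.map_finset_sup (hs.pairwiseDisjoint_snd.subset (coe_subset.2 hts)),
    hlam.map_finset_sup (hs.pairwiseDisjoint_fst.subset (coe_subset.2 hts))]
  exact sum_congr rfl fun p hp => hs.measure_eq p (hts hp)

theorem swap (hs : IsMatchedPartition μ lam a s) :
    IsMatchedPartition lam μ a.swap (s.map (Equiv.prodComm B B).toEmbedding) where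
  fst_ne_bot p hp := hs.snd_ne_bot _ (mem_map_equiv.1 hp)
  snd_ne_bot p hp := hs.fst_ne_bot _ (mem_map_equiv.1 hp)
  measure_eq p hp := (hs.measure_eq _ (mem_map_equiv.1 hp)).symm
  pairwiseDisjoint_fst := by
    rw [coe_map]
    exact (Function.Embedding.injective _).injOn.pairwiseDisjoint_image.2 hs.pairwiseDisjoint_snd
  pairwiseDisjoint_snd := by
    rw [coe_map]
    exact (Function.Embedding.injective _).injOn.pairwiseDisjoint_image.2 hs.pairwiseDisjoint_fst
  sup_fst := by rw [sup_map]; exact hs.sup_snd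
  sup_snd := by rw [sup_map]; exact hs.sup_fst

theorem biUnion (hs : IsMatchedPartition μ lam a s) {F : B × B → Finset (B × B)}
    (hF : ∀ p ∈ s, IsMatchedPartition μ lam p (F p)) :
    IsMatchedPartition μ lam a (s.biUnion F) where
  fst_ne_bot q hq := by
    obtain ⟨p, hp, hq⟩ := mem_biUnion.1 hq
    exact (hF p hp).fst_ne_bot q hq
  snd_ne_bot q hq := by
    obtain ⟨p, hp, hq⟩ := mem_biUnion.1 hq
    exact (hF p hp).snd_ne_bot q hq
  measure_eq q hq := by
    obtain ⟨p, hp, hq⟩ := mem_biUnion.1 hq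
    exact (hF p hp).measure_eq q hq
  pairwiseDisjoint_fst := by
    rw [coe_biUnion]
    refine Set.PairwiseDisjoint.biUnion_finset ?_ fun p hp => (hF p hp).pairwiseDisjoint_fst
    intro p hp q hq hpq
    rw [Function.onFun, (hF p hp).sup_fst, (hF q hq).sup_fst]
    exact hs.pairwiseDisjoint_fst hp hq hpq
  pairwiseDisjoint_snd := by
    rw [coe_biUnion]
    refine Set.PairwiseDisjoint.biUnion_finset ?_ fun p hp => (hF p hp).pairwiseDisjoint_snd
    intro p hp q hq hpq
    rw [Function.onFun, (hF p hp).sup_snd, (hF q hq).sup_snd]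
    exact hs.pairwiseDisjoint_snd hp hq hpq
  sup_fst := by rw [sup_biUnion, sup_congr rfl fun p hp => (hF p hp).sup_fst, hs.sup_fst]
  sup_snd := by rw [sup_biUnion, sup_congr rfl fun p hp => (hF p hp).sup_snd, hs.sup_snd]

theorem snd_eq_top_of_fst_eq_top (hs : IsMatchedPartition μ lam (⊤, ⊤) s) {p : B × B}
    (hp : p ∈ s) (htop : p.1 = ⊤) : p.2 = ⊤ := by
  have hsingleton : s = {p} := by
    refine Subset.antisymm (fun q hq => mem_singleton.2 ?_) (singleton_subset_iff.2 hp)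
    by_contra hqp
    exact hs.fst_ne_bot q hq (disjoint_top.1 (htop ▸ hs.pairwiseDisjoint_fst hq hp hqp))
  simpa [hsingleton] using hs.sup_snd

theorem measure_compl (hμ : IsBAMeasure μ) (hlam : IsBAMeasure lam)
    (hs : IsMatchedPartition μ lam (⊤, ⊤) s) {p : B × B} (hp : p ∈ s) : μ p.2ᶜ = lam p.1ᶜ := by
  rw [← sup_erase_eq_compl hs.pairwiseDisjoint_snd hs.sup_snd hp,
    ← sup_erase_eq_compl hs.pairwiseDisjoint_fst hs.sup_fst hp]
  exact hs.measure_sup hμ hlam (erase_subset p s)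

end IsMatchedPartition

section Splitting

variable {s : Finset (B × B)}

theorem exists_isMatchedPartition_pair_of_sup_eq_top
    (hatomless : ∀ a : B, a ≠ ⊥ → ∃ b : B, b ≠ ⊥ ∧ b < a) (hμ : IsBAMeasure μ)
    (hlam : IsBAMeasure lam) (hsub : TrinarySpectrum lam ⊆ TrinarySpectrum μ) {x y : B}
    (hx : x ≠ ⊥) (hy : y ≠ ⊥) (hxy : Disjoint x y) (htop : x ⊔ y = ⊤) :
    ∃ u v : B, IsMatchedPartition μ lam (⊤, ⊤) {(x, u), (y, v)} := by
  obtain ⟨y₁, y₂, hy₁, hy₂, hy₁₂, rfl⟩ := exists_disjoint_sup_eq_of_ne_bot hatomless hy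
  have hpart : IsPartition3 x y₁ y₂ := ⟨hx, hy₁, hy₂, hxy.mono_right le_sup_left,
    hxy.mono_right le_sup_right, hy₁₂, by rwa [sup_assoc]⟩
  obtain ⟨a, b, c, ⟨ha, hb, -, hab, hac, hbc, habc⟩, heq⟩ := hsub ⟨x, y₁, y₂, hpart, rfl⟩
  simp only [Prod.mk.injEq] at heq
  have hmatch := isMatchedPartition_pair (μ := μ) hx hy ha (fun h => hb (eq_bot_mono le_sup_left h))
    hxy (hab.sup_right hac) heq.1.symm
    (by rw [hμ.2 _ _ hbc, hlam.2 _ _ hy₁₂, heq.2.1, heq.2.2])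
  rw [htop, ← sup_assoc, habc] at hmatch
  exact ⟨a, b ⊔ c, hmatch⟩

theorem exists_isMatchedPartition_pair_of_sup_ne_top (h4μ : MeasHas4EP μ)
    (hlam : IsBAMeasure lam) (hsub : TrinarySpectrum lam ⊆ TrinarySpectrum μ) {x y d : B}
    (hx : x ≠ ⊥) (hy : y ≠ ⊥) (hxy : Disjoint x y) (hne : x ⊔ y ≠ ⊤) (hd : μ d = lam (x ⊔ y))
    (hdc : μ dᶜ = lam (x ⊔ y)ᶜ) :
    ∃ u v : B, IsMatchedPartition μ lam (x ⊔ y, d) {(x, u), (y, v)} := by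
  have hpart : IsPartition3 x y (x ⊔ y)ᶜ := ⟨hx, hy, fun h => hne (compl_eq_bot.1 h), hxy,
    disjoint_compl_right.mono_left le_sup_left, disjoint_compl_right.mono_left le_sup_right,
    sup_compl_eq_top⟩
  obtain ⟨a, b, c, habc, heq⟩ := hsub ⟨x, y, _, hpart, rfl⟩
  simp only [Prod.mk.injEq] at heq
  obtain ⟨u, v, hu, hv, huv, hua, hvb, rfl⟩ := h4μ a b c d habc
    (by rw [← heq.1, ← heq.2.1, ← hlam.2 _ _ hxy, hd]) (by rw [← heq.2.2, hdc])
  exact ⟨u, v, isMatchedPartition_pair hx hy hu.1 hv.1 hxy huv (hua.trans heq.1.symm)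
    (hvb.trans heq.2.1.symm)⟩

theorem IsMatchedPartition.exists_pair_of_mem
    (hatomless : ∀ a : B, a ≠ ⊥ → ∃ b : B, b ≠ ⊥ ∧ b < a) (hμ : IsBAMeasure μ)
    (hlam : IsBAMeasure lam) (h4μ : MeasHas4EP μ) (hsub : TrinarySpectrum lam ⊆ TrinarySpectrum μ)
    (hs : IsMatchedPartition μ lam (⊤, ⊤) s) {p : B × B} (hp : p ∈ s) {x y : B} (hx : x ≠ ⊥)
    (hy : y ≠ ⊥) (hxy : Disjoint x y) (hsup : x ⊔ y = p.1) :
    ∃ u v : B, IsMatchedPartition μ lam p {(x, u), (y, v)} := by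
  obtain ⟨a, d⟩ := p
  dsimp only at hsup
  subst hsup
  by_cases htop : x ⊔ y = ⊤
  · obtain rfl : d = ⊤ := hs.snd_eq_top_of_fst_eq_top hp htop
    rw [htop]
    exact exists_isMatchedPartition_pair_of_sup_eq_top hatomless hμ hlam hsub hx hy hxy htop
  · exact exists_isMatchedPartition_pair_of_sup_ne_top h4μ hlam hsub hx hy hxy htop
      (hs.measure_eq _ hp) (hs.measure_compl hμ hlam hp)

theorem IsMatchedPartition.exists_refinement_splitting
    (hatomless : ∀ a : B, a ≠ ⊥ → ∃ b : B, b ≠ ⊥ ∧ b < a) (hμ : IsBAMeasure μ)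
    (hlam : IsBAMeasure lam) (h4μ : MeasHas4EP μ) (hsub : TrinarySpectrum lam ⊆ TrinarySpectrum μ)
    (hs : IsMatchedPartition μ lam (⊤, ⊤) s) {p : B × B} (hp : p ∈ s) (c : B) :
    ∃ F, IsMatchedPartition μ lam p F ∧ ∀ q ∈ F, q.1 ≤ c ∨ Disjoint q.1 c := by
  by_cases hpc : p.1 ≤ c ∨ Disjoint p.1 c
  · refine ⟨{p}, isMatchedPartition_singleton (hs.fst_ne_bot p hp) (hs.snd_ne_bot p hp)
      (hs.measure_eq p hp), by simpa using hpc⟩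
  obtain ⟨hnle, hndisj⟩ := not_or.1 hpc
  obtain ⟨u, v, huv⟩ := hs.exists_pair_of_mem hatomless hμ hlam h4μ hsub hp
    (fun h => hndisj (disjoint_iff.2 h)) (fun h => hnle (sdiff_eq_bot_iff.1 h)) disjoint_inf_sdiff
    (sup_inf_sdiff p.1 c)
  exact ⟨_, huv, by simp [disjoint_sdiff_self_left]⟩

end Splitting

@[ext]
structure MatchedPartition (μ lam : B → S) where
  pairs : Finset (B × B)
  isMatchedPartition : IsMatchedPartition μ lam (⊤, ⊤) pairs

namespace MatchedPartition

/-- `s ≤ t` means that `t` refines `s`. -/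
instance : Preorder (MatchedPartition μ lam) where
  le s t := ∀ q ∈ t.pairs, ∃ p ∈ s.pairs, q ≤ p
  le_refl s q hq := ⟨q, hq, le_rfl⟩
  le_trans s t u hst htu q hq := by
    obtain ⟨p, hp, hqp⟩ := htu q hq
    obtain ⟨r, hr, hpr⟩ := hst p hp
    exact ⟨r, hr, hqp.trans hpr⟩

variable (s t : MatchedPartition μ lam) {c d : B}

def swap : MatchedPartition lam μ :=
  ⟨s.pairs.map (Equiv.prodComm B B).toEmbedding, s.isMatchedPartition.swap⟩

theorem mem_swap {q : B × B} : q ∈ s.swap.pairs ↔ q.swap ∈ s.pairs := mem_map_equiv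

@[simp]
theorem swap_swap : s.swap.swap = s := by
  ext q
  simp [mem_swap]

variable {s t}

theorem swap_le_swap (h : s ≤ t) : s.swap ≤ t.swap := fun q hq => by
  obtain ⟨p, hp, hqp⟩ := h q.swap ((mem_swap t).1 hq)
  exact ⟨p.swap, (mem_swap s).2 hp, Prod.swap_le_swap.2 hqp⟩

variable (s) in
def Splits (c : B) : Prop := ∀ p ∈ s.pairs, p.1 ≤ c ∨ Disjoint p.1 c

theorem Splits.mono (hs : s.Splits c) (hst : s ≤ t) : t.Splits c := fun q hq => by
  obtain ⟨p, hp, hqp⟩ := hst q hq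
  exact (hs p hp).imp hqp.1.trans (Disjoint.mono_left hqp.1)

variable (s) in
noncomputable def image (c : B) : B := (s.pairs.filter fun p => p.1 ≤ c).sup Prod.snd

theorem splits_swap_iff : s.swap.Splits c ↔ ∀ p ∈ s.pairs, p.2 ≤ c ∨ Disjoint p.2 c :=
  ⟨fun h p hp => h p.swap ((mem_swap s).2 hp), fun h q hq => h q.swap ((mem_swap s).1 hq)⟩

theorem sup_filter_fst (hc : s.Splits c) :
    (s.pairs.filter fun p => p.1 ≤ c).sup Prod.fst = c :=
  sup_filter_le_eq s.isMatchedPartition.sup_fst hc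

variable (s) in
theorem image_swap (y : B) : s.swap.image y = (s.pairs.filter fun p => p.2 ≤ y).sup Prod.fst := by
  rw [image, swap, filter_map, sup_map]
  rfl

theorem image_eq_of_le (hc : s.Splits c) (hst : s ≤ t) : t.image c = s.image c := by
  refine le_antisymm (Finset.sup_le fun q hq => ?_) (Finset.sup_le fun p hp => ?_)
  · obtain ⟨hqt, hqc⟩ := mem_filter.1 hq
    obtain ⟨p, hp, hqp⟩ := hst q hqt
    have hpc : p.1 ≤ c := (hc p hp).resolve_right fun h =>
      t.isMatchedPartition.fst_ne_bot q hqt ((h.mono_left hqp.1).eq_bot_of_le hqc)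
    exact hqp.2.trans (le_sup (mem_filter.2 ⟨hp, hpc⟩))
  · obtain ⟨hps, hpc⟩ := mem_filter.1 hp
    calc p.2 = t.pairs.sup fun q => p.2 ⊓ q.2 := by
          rw [← sup_inf_distrib_left, t.isMatchedPartition.sup_snd, inf_top_eq]
      _ ≤ t.image c := Finset.sup_le fun q hq => by
        by_cases hqc : q.1 ≤ c
        · exact inf_le_right.trans (le_sup (mem_filter.2 ⟨hq, hqc⟩))
        · obtain ⟨p', hp', hqp'⟩ := hst q hq
          have hp'p : p' ≠ p := by rintro rfl; exact hqc (hqp'.1.trans hpc)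
          have hdisj := (s.isMatchedPartition.pairwiseDisjoint_snd hp' hps hp'p).mono_left hqp'.2
          simp [hdisj.symm.eq_bot]

theorem image_le_image_iff (hc : s.Splits c) : s.image c ≤ s.image d ↔ c ≤ d := by
  refine ⟨fun h => ?_, fun h => sup_mono fun p hp => ?_⟩
  · rw [← sup_filter_fst hc]
    refine Finset.sup_le fun p hp => ?_
    have hpd : p ∈ s.pairs.filter fun p => p.1 ≤ d :=
      mem_of_le_sup_of_pairwiseDisjoint s.isMatchedPartition.pairwiseDisjoint_snd
        (filter_subset _ _) (mem_filter.1 hp).1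
        (s.isMatchedPartition.snd_ne_bot p (mem_filter.1 hp).1) ((le_sup hp).trans h)
    exact (mem_filter.1 hpd).2
  · exact mem_filter.2 ⟨(mem_filter.1 hp).1, (mem_filter.1 hp).2.trans h⟩

theorem measure_image (hμ : IsBAMeasure μ) (hlam : IsBAMeasure lam) (hc : s.Splits c) :
    μ (s.image c) = lam c := by
  rw [image, s.isMatchedPartition.measure_sup hμ hlam (filter_subset _ _), sup_filter_fst hc]

variable (s) in
theorem splits_image_swap (y : B) : s.Splits (s.swap.image y) := fun p hp => by
  rw [image_swap]
  by_cases h : p.2 ≤ y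
  · exact Or.inl (le_sup (f := Prod.fst) (mem_filter.2 ⟨hp, h⟩))
  · refine Or.inr (Finset.disjoint_sup_right.2 fun q hq =>
      s.isMatchedPartition.pairwiseDisjoint_fst hp (mem_filter.1 hq).1 ?_)
    rintro rfl
    exact h (mem_filter.1 hq).2

theorem image_image_swap {y : B} (hy : s.swap.Splits y) : s.image (s.swap.image y) = y := by
  have hfilter : (s.pairs.filter fun p => p.1 ≤ s.swap.image y) =
      s.pairs.filter fun p => p.2 ≤ y := by
    ext p
    simp only [mem_filter, and_congr_right_iff]
    intro hp
    rw [image_swap]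
    refine ⟨fun h => ?_, fun h => le_sup (f := Prod.fst) (mem_filter.2 ⟨hp, h⟩)⟩
    have hpy : p ∈ s.pairs.filter fun p => p.2 ≤ y :=
      mem_of_le_sup_of_pairwiseDisjoint s.isMatchedPartition.pairwiseDisjoint_fst
        (filter_subset _ _) hp (s.isMatchedPartition.fst_ne_bot p hp) h
    exact (mem_filter.1 hpy).2
  rw [image, hfilter]
  exact sup_filter_le_eq s.isMatchedPartition.sup_snd (splits_swap_iff.1 hy)

theorem exists_le_splits (hatomless : ∀ a : B, a ≠ ⊥ → ∃ b : B, b ≠ ⊥ ∧ b < a)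
    (hμ : IsBAMeasure μ) (hlam : IsBAMeasure lam) (h4μ : MeasHas4EP μ)
    (hsub : TrinarySpectrum lam ⊆ TrinarySpectrum μ) (s : MatchedPartition μ lam) (c : B) :
    ∃ t, s ≤ t ∧ t.Splits c := by
  choose! F hF hFc using fun p (hp : p ∈ s.pairs) =>
    s.isMatchedPartition.exists_refinement_splitting hatomless hμ hlam h4μ hsub hp c
  refine ⟨⟨s.pairs.biUnion F, s.isMatchedPartition.biUnion hF⟩, fun q hq => ?_, fun q hq => ?_⟩
  · obtain ⟨p, hp, hqp⟩ := mem_biUnion.1 hq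
    exact ⟨p, hp, (hF p hp).le_of_mem hqp⟩
  · obtain ⟨p, hp, hqp⟩ := mem_biUnion.1 hq
    exact hFc p hp q hqp

theorem exists_le_splits_and_swap_splits (hatomless : ∀ a : B, a ≠ ⊥ → ∃ b : B, b ≠ ⊥ ∧ b < a)
    (hμ : IsBAMeasure μ) (hlam : IsBAMeasure lam) (h4μ : MeasHas4EP μ) (h4lam : MeasHas4EP lam)
    (hspec : TrinarySpectrum lam = TrinarySpectrum μ) (s : MatchedPartition μ lam) (c : B) :
    ∃ t, s ≤ t ∧ t.Splits c ∧ t.swap.Splits c := by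
  obtain ⟨t₁, hst₁, ht₁⟩ := exists_le_splits hatomless hμ hlam h4μ hspec.le s c
  obtain ⟨t₂, ht₁t₂, ht₂⟩ := exists_le_splits hatomless hlam hμ h4lam hspec.ge t₁.swap c
  have ht₁t₂' : t₁ ≤ t₂.swap := by simpa using swap_le_swap ht₁t₂
  exact ⟨t₂.swap, hst₁.trans ht₁t₂', ht₁.mono ht₁t₂', by rwa [swap_swap]⟩

theorem exists_orderIso_of_directedOn (hμ : IsBAMeasure μ) (hlam : IsBAMeasure lam)
    {I : Set (MatchedPartition μ lam)} (hI : DirectedOn (· ≤ ·) I)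
    (hsplit : ∀ c, ∃ t ∈ I, t.Splits c ∧ t.swap.Splits c) :
    ∃ Φ : B ≃o B, ∀ b, lam b = μ (Φ b) := by
  choose t htI hts htss using hsplit
  set Φ : B → B := fun c => (t c).image c
  have image_eq : ∀ s ∈ I, ∀ c, s.Splits c → s.image c = Φ c := fun s hs c hc => by
    obtain ⟨u, -, hsu, htu⟩ := hI s hs (t c) (htI c)
    rw [← image_eq_of_le hc hsu, image_eq_of_le (hts c) htu]
  have le_iff : ∀ c d, Φ c ≤ Φ d ↔ c ≤ d := fun c d => by
    obtain ⟨u, huI, hcu, hdu⟩ := hI _ (htI c) _ (htI d)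
    rw [← image_eq u huI c ((hts c).mono hcu), ← image_eq u huI d ((hts d).mono hdu)]
    exact image_le_image_iff ((hts c).mono hcu)
  have surj : Function.Surjective Φ := fun y =>
    ⟨_, (image_eq _ (htI y) _ ((t y).splits_image_swap y)).symm.trans (image_image_swap (htss y))⟩
  exact ⟨OrderIso.ofSurjective (OrderEmbedding.ofMapLEIff Φ le_iff) surj,
    fun b => (measure_image hμ hlam (hts b)).symm⟩

end MatchedPartition

/-- two measures with (4EP) are conjugate by a Boolean algebra
automorphism iff their trinary spectra coincide. -/
theorem conjugate_iff_spectrum_eq [Countable B] [Nontrivial B]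
    (hatomless : ∀ a : B, a ≠ ⊥ → ∃ b : B, b ≠ ⊥ ∧ b < a)
    (μ lam : B → S) (hμ : IsBAMeasure μ) (hlam : IsBAMeasure lam)
    (h4μ : MeasHas4EP μ) (h4lam : MeasHas4EP lam) :
    (∃ Φ : B ≃o B, ∀ b : B, lam b = μ (Φ b)) ↔
      TrinarySpectrum lam = TrinarySpectrum μ := by
  refine ⟨fun ⟨Φ, hΦ⟩ => (trinarySpectrum_subset_of_forall_eq_comp Φ hΦ).antisymm
    (trinarySpectrum_subset_of_forall_eq_comp Φ.symm fun b => by rw [hΦ, Φ.apply_symm_apply]),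
    fun hspec => ?_⟩
  have : Encodable B := Encodable.ofCountable B
  let base : MatchedPartition μ lam := ⟨{(⊤, ⊤)}, isMatchedPartition_singleton top_ne_bot
    top_ne_bot (map_top_eq_of_trinarySpectrum_subset hatomless hμ hlam hspec.le)⟩
  let cofinal (c : B) : Order.Cofinal (MatchedPartition μ lam) :=
    ⟨{t | t.Splits c ∧ t.swap.Splits c}, fun s =>
      (MatchedPartition.exists_le_splits_and_swap_splits hatomless hμ hlam h4μ h4lam hspec s c).imp
        fun _ ht => ⟨ht.2, ht.1⟩⟩
  exact MatchedPartition.exists_orderIso_of_directedOn hμ hlam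
    (Order.idealOfCofinals base cofinal).directed
    fun c => Order.cofinal_meets_idealOfCofinals base cofinal c |>.imp fun _ ht => ⟨ht.2, ht.1⟩
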